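/- arXiv:1007.0896 — 3 statements merged into one kernel-verified Lean document; each statement's English description precedes it below -/
import Mathlib

section
/- Let σ : ℝ → ℝ be Lipschitz-continuous with constant C, and define sg(z) = 1 for z ≥ 0 and sg(z) = -1 for z < 0. Then for all r₁, z₁, r₂, z₂ ∈ ℝ, |sg(r₁ - z₁)(σ(r₁) - σ(z₁)) - sg(r₂ - z₂)(σ(r₂) - σ(z₂))| ≤ C(|r₁ - r₂| + |z₁ - z₂|). -/
/-- The sign function: `sg z = 1` for `z ≥ 0` and `sg z = -1` for `z < 0`. -/
noncomputable def sg (z : ℝ) : ℝ := if 0 ≤ z then 1 else -1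

/-- if `σ` is Lipschitz with constant `C`, then
`|sg(r₁-z₁)(σ r₁ - σ z₁) - sg(r₂-z₂)(σ r₂ - σ z₂)| ≤ C(|r₁-r₂| + |z₁-z₂|)`. -/
theorem stmt6 (σ : ℝ → ℝ) (C : ℝ) (hC : 0 ≤ C)
    (hLip : ∀ r z : ℝ, |σ r - σ z| ≤ C * |r - z|) (r₁ z₁ r₂ z₂ : ℝ) :
    |sg (r₁ - z₁) * (σ r₁ - σ z₁) - sg (r₂ - z₂) * (σ r₂ - σ z₂)|
      ≤ C * (|r₁ - r₂| + |z₁ - z₂|) := by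
  have h1 := hLip r₁ z₁
  have h2 := hLip r₂ z₂
  have h3 := hLip r₁ r₂
  have h4 := hLip z₁ z₂
  have hr : C * (r₁ - r₂) ≤ C * |r₁ - r₂| := mul_le_mul_of_nonneg_left (le_abs_self _) hC
  have hr' : C * (r₂ - r₁) ≤ C * |r₁ - r₂| := by
    calc C * (r₂ - r₁) ≤ C * |r₂ - r₁| := mul_le_mul_of_nonneg_left (le_abs_self _) hC
    _ = C * |r₁ - r₂| := by rw [abs_sub_comm]
  have hz : C * (z₁ - z₂) ≤ C * |z₁ - z₂| := mul_le_mul_of_nonneg_left (le_abs_self _) hC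
  have hz' : C * (z₂ - z₁) ≤ C * |z₁ - z₂| := by
    calc C * (z₂ - z₁) ≤ C * |z₂ - z₁| := mul_le_mul_of_nonneg_left (le_abs_self _) hC
    _ = C * |z₁ - z₂| := by rw [abs_sub_comm]
  rw [abs_le] at h3 h4
  unfold sg
  split_ifs with hA hB hB
  · rw [abs_of_nonneg hA] at h1
    rw [abs_le]; constructor <;> nlinarith [h3.1, h3.2, h4.1, h4.2]
  · rw [abs_of_nonneg hA] at h1
    rw [abs_of_neg (not_le.mp hB)] at h2
    rw [abs_le] at h1 h2
    rw [abs_le]; constructor <;> nlinarith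
  · rw [abs_of_neg (not_le.mp hA)] at h1
    rw [abs_of_nonneg hB] at h2
    rw [abs_le] at h1 h2
    rw [abs_le]; constructor <;> nlinarith
  · rw [abs_le]; constructor <;> nlinarith [h3.1, h3.2, h4.1, h4.2]
end

section
/- Let X be a Polish space, μ and ν probability measures on X, and Ψ : X × X → [0,∞) a continuous function with Ψ(x,y) > 0 whenever x ≠ y. Suppose there exists a sequence of X × X-valued random variables (X_n, Y_n)_{n≥1} such that X_n has law μ and Y_n has law ν for each n, and E[Ψ(X_n, Y_n)] → 0 as n → ∞. Then μ = ν. -/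
/-!
The laws `π n` of `(Xn n, Yn n)` are couplings of `μ` and `ν`; having fixed marginals, they form a
tight family. On a compact set, `Ψ` is bounded below by a positive constant away from the
diagonal, so Markov's inequality gives `π n C → 0` for every closed `C` disjoint from the
diagonal. For closed `F ⊆ U` open, `μ F ≤ ν U + π n (F ×ˢ Uᶜ)`, hence `μ F ≤ ν F` by outer
regularity, and this inequality on all closed sets forces `μ = ν` for finite measures of equal
mass.
-/

open MeasureTheory Filter Set Topology

namespace MeasureTheory

theorem IsTightMeasureSet.tendsto_measure_of_tendsto_lintegral {Z : Type*} [TopologicalSpace Z]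
    [MeasurableSpace Z] [OpensMeasurableSpace Z] {π : ℕ → Measure Z}
    (hπ : IsTightMeasureSet (range π)) {Ψ : Z → ℝ} (hΨ : Continuous Ψ)
    (hlim : Tendsto (fun n => ∫⁻ z, ENNReal.ofReal (Ψ z) ∂π n) atTop (𝓝 0))
    {C : Set Z} (hC : IsClosed C) (hΨC : ∀ z ∈ C, 0 < Ψ z) :
    Tendsto (fun n => π n C) atTop (𝓝 0) := by
  refine ENNReal.tendsto_nhds_zero.2 fun ε hε => ?_
  obtain ⟨K, hK, hKε⟩ := isTightMeasureSet_iff_exists_isCompact_measure_compl_le.1 hπ (ε / 2)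
    (ENNReal.half_pos hε.ne')
  obtain ⟨c, hc, hcΨ⟩ := (hK.inter_left hC).exists_forall_le' hΨ.continuousOn
    fun z hz => hΨC z hz.1
  have hc' : ENNReal.ofReal c ≠ 0 := (ENNReal.ofReal_pos.2 hc).ne'
  filter_upwards [ENNReal.tendsto_nhds_zero.1 hlim _
    (ENNReal.mul_pos hc' (ENNReal.half_pos hε.ne').ne')] with n hn
  have hmarkov : π n (C ∩ K) ≤ ε / 2 := by
    refine (ENNReal.mul_le_mul_iff_right hc' ENNReal.ofReal_ne_top).1 ?_
    calc ENNReal.ofReal c * π n (C ∩ K)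
        ≤ ENNReal.ofReal c * π n {z | ENNReal.ofReal c ≤ ENNReal.ofReal (Ψ z)} :=
          mul_le_mul_right (measure_mono fun z hz => ENNReal.ofReal_le_ofReal (hcΨ z hz)) _
      _ ≤ ∫⁻ z, ENNReal.ofReal (Ψ z) ∂π n :=
          mul_meas_ge_le_lintegral₀ hΨ.measurable.ennreal_ofReal.aemeasurable _
      _ ≤ ENNReal.ofReal c * (ε / 2) := hn
  calc π n C ≤ π n (C ∩ K) + π n (C \ K) := measure_le_inter_add_sdiff _ _ _
    _ ≤ ε / 2 + ε / 2 := add_le_add hmarkov ((measure_mono (sdiff_subset_compl _ _)).trans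
      (hKε _ ⟨n, rfl⟩))
    _ = ε := ENNReal.add_halves ε

variable {X : Type*} [TopologicalSpace X] [MeasurableSpace X]

theorem measure_le_of_tendsto_measure_disjoint_diagonal [OpensMeasurableSpace X]
    {μ ν : Measure X} [ν.OuterRegular] {π : ℕ → Measure (X × X)}
    (hfst : ∀ n, (π n).fst = μ) (hsnd : ∀ n, (π n).snd = ν)
    (hπ : ∀ C, IsClosed C → Disjoint C (diagonal X) → Tendsto (fun n => π n C) atTop (𝓝 0))
    {F : Set X} (hF : IsClosed F) : μ F ≤ ν F := by
  rw [F.measure_eq_iInf_isOpen ν]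
  refine le_iInf₂ fun U hFU => le_iInf fun hU => ?_
  have hC : Disjoint (F ×ˢ Uᶜ) (diagonal X) := by
    rw [disjoint_left]
    rintro ⟨x, y⟩ ⟨hx, hy⟩ (rfl : x = y)
    exact hy (hFU hx)
  have hcoupling : ∀ n, μ F ≤ ν U + π n (F ×ˢ Uᶜ) := fun n => by
    rw [← hfst n, ← hsnd n, Measure.fst_apply hF.measurableSet,
      Measure.snd_apply hU.measurableSet]
    refine (measure_mono fun p hp => ?_).trans (measure_union_le _ _)
    by_cases hpU : p.2 ∈ U
    exacts [Or.inl hpU, Or.inr ⟨hp, hpU⟩]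
  simpa using ge_of_tendsto' (tendsto_const_nhds.add
    (hπ _ (hF.prod hU.isClosed_compl) hC)) hcoupling

theorem Measure.eq_of_forall_measure_isClosed_le [BorelSpace X] {μ ν : Measure X}
    [IsFiniteMeasure μ] [μ.OuterRegular] [ν.OuterRegular] (huniv : μ univ = ν univ)
    (h : ∀ F, IsClosed F → μ F ≤ ν F) : μ = ν := by
  have hν : IsFiniteMeasure ν := ⟨huniv ▸ measure_lt_top μ univ⟩
  have hopen : ∀ U, IsOpen U → ν U ≤ μ U := fun U hU => by
    rw [← compl_compl U, measure_compl hU.isClosed_compl.measurableSet (measure_ne_top _ _),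
      measure_compl hU.isClosed_compl.measurableSet (measure_ne_top _ _), huniv]
    exact tsub_le_tsub_left (h _ hU.isClosed_compl) _
  refine ext_of_generate_finite _ (BorelSpace.measurable_eq.trans borel_eq_generateFrom_isClosed)
    isPiSystem_isClosed (fun F hF => le_antisymm (h F hF) ?_) huniv
  rw [F.measure_eq_iInf_isOpen ν, F.measure_eq_iInf_isOpen μ]
  exact iInf₂_mono fun U _ => iInf_mono fun hU => hopen U hU

end MeasureTheory

theorem stmt11_general {X : Type} [TopologicalSpace X] [PolishSpace X]
    [MeasurableSpace X] [BorelSpace X]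
    (μ ν : Measure X) [IsProbabilityMeasure μ] [IsProbabilityMeasure ν]
    (Ψ : X × X → ℝ) (hΨc : Continuous Ψ)
    (hΨpos : ∀ x y : X, x ≠ y → 0 < Ψ (x, y))
    {Ω : Type} [MeasurableSpace Ω] (P : Measure Ω)
    (Xn Yn : ℕ → Ω → X) (hXm : ∀ n, Measurable (Xn n)) (hYm : ∀ n, Measurable (Yn n))
    (hXlaw : ∀ n, Measure.map (Xn n) P = μ) (hYlaw : ∀ n, Measure.map (Yn n) P = ν)
    (hconv : Tendsto (fun n => ∫⁻ ω, ENNReal.ofReal (Ψ (Xn n ω, Yn n ω)) ∂P)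
      atTop (nhds 0)) :
    μ = ν := by
  set π : ℕ → Measure (X × X) := fun n => P.map fun ω => (Xn n ω, Yn n ω)
  have hfst : ∀ n, (π n).fst = μ := fun n => by rw [Measure.fst_map_prodMk (hYm n), hXlaw]
  have hsnd : ∀ n, (π n).snd = ν := fun n => by rw [Measure.snd_map_prodMk (hXm n), hYlaw]
  have htight : IsTightMeasureSet (range π) := by
    refine IsTightMeasureSet.prodMk ((isTightMeasureSet_singleton (μ := μ)).subset ?_)
      ((isTightMeasureSet_singleton (μ := ν)).subset ?_)
    all_goals rintro _ ⟨_, ⟨n, rfl⟩, rfl⟩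
    exacts [hfst n, hsnd n]
  have hlim : Tendsto (fun n => ∫⁻ p, ENNReal.ofReal (Ψ p) ∂π n) atTop (𝓝 0) := by
    simpa only [π, lintegral_map hΨc.measurable.ennreal_ofReal
      ((hXm _).prodMk (hYm _))] using hconv
  refine Measure.eq_of_forall_measure_isClosed_le (by simp) fun F hF =>
    measure_le_of_tendsto_measure_disjoint_diagonal hfst hsnd (fun C hC hCdiag => ?_) hF
  refine htight.tendsto_measure_of_tendsto_lintegral hΨc hlim hC fun p hp => ?_
  exact hΨpos p.1 p.2 fun h => hCdiag.notMem_of_mem_left hp h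

/-- coupling lemma. If `X` is Polish, `Ψ : X × X → [0,∞)` is continuous and
positive off the diagonal, and there are random variables `(X_n, Y_n)` with fixed marginals
`μ, ν` such that `E[Ψ(X_n, Y_n)] → 0`, then `μ = ν`. -/
theorem stmt11 {X : Type} [TopologicalSpace X] [PolishSpace X]
    [MeasurableSpace X] [BorelSpace X]
    (μ ν : Measure X) [IsProbabilityMeasure μ] [IsProbabilityMeasure ν]
    (Ψ : X × X → ℝ) (hΨc : Continuous Ψ) (hΨnn : ∀ p, 0 ≤ Ψ p)
    (hΨpos : ∀ x y : X, x ≠ y → 0 < Ψ (x, y))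
    {Ω : Type} [MeasurableSpace Ω] (P : Measure Ω) [IsProbabilityMeasure P]
    (Xn Yn : ℕ → Ω → X) (hXm : ∀ n, Measurable (Xn n)) (hYm : ∀ n, Measurable (Yn n))
    (hXlaw : ∀ n, Measure.map (Xn n) P = μ) (hYlaw : ∀ n, Measure.map (Yn n) P = ν)
    (hconv : Tendsto (fun n => ∫⁻ ω, ENNReal.ofReal (Ψ (Xn n ω, Yn n ω)) ∂P)
      atTop (nhds 0)) :
    μ = ν :=
  stmt11_general μ ν Ψ hΨc hΨpos P Xn Yn hXm hYm hXlaw hYlaw hconv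
end

section
/- Let b(z) = -z - sin z. Then b is non-increasing on ℝ, Lipschitz-continuous with constant 2, and there exists ε > 0 such that for all r, z ∈ ℝ, |b(r) - b(z)| ≥ ε ρ_3(|r - z|), where ρ_3(x) = x³ for x ∈ [0,1] and ρ_3(x) = 3x - 2 for x ≥ 1. -/
/-!
Write `b = -(id + sin)`. Since `sin` is 1-Lipschitz, `b` is antitone and 2-Lipschitz. For the lower
bound, the sum-to-product formula gives `|sin r - sin z| ≤ 2 |sin (h / 2)|` with `h = |r - z|`, so
`|b r - b z| ≥ h - 2 |sin (h / 2)|`. This gap is monotone in `h`, of order `h³ / 24` near `0` by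
the Taylor expansion of `sin`, and at least `h - 2`; hence it dominates a multiple of `ρ_3 h`.
-/

/-- `ρ_3(x) = x³` on `[0,1]` and `ρ_3(x) = 3x - 2` on `[1,∞)`. -/
noncomputable def ρ3 (x : ℝ) : ℝ := if x ≤ 1 then x ^ 3 else 3 * x - 2

open Real

noncomputable def b (z : ℝ) : ℝ := -z - sin z

lemma antitone_b : Antitone b := fun x y hxy => by
  have hsin := (abs_le.1 (abs_sin_sub_sin_le x y)).2
  rw [abs_of_nonpos (sub_nonpos.2 hxy)] at hsin
  unfold b
  linarith

lemma lipschitzWith_b : LipschitzWith 2 b :=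
  one_add_one_eq_two (R := NNReal) ▸ LipschitzWith.id.neg.sub lipschitzWith_sin

lemma abs_sin_sub_sin_le_two_mul_abs_sin_half (x y : ℝ) :
    |sin x - sin y| ≤ 2 * |sin (|x - y| / 2)| := by
  have heven : |sin ((x - y) / 2)| = |sin (|x - y| / 2)| := by
    rcases abs_choice (x - y) with h | h
    · rw [h]
    · rw [h, neg_div, sin_neg, abs_neg]
  rw [sin_sub_sin, abs_mul, abs_mul, abs_two, heven]
  exact mul_le_of_le_one_right (by positivity) (abs_cos_le_one _)

lemma sub_two_mul_abs_sin_half_le_abs_b_sub_b (r z : ℝ) :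
    |r - z| - 2 * |sin (|r - z| / 2)| ≤ |b r - b z| := by
  have hb : b r - b z = -((r - z) + (sin r - sin z)) := by unfold b; ring
  have htri := abs_sub (r - z + (sin r - sin z)) (sin r - sin z)
  rw [add_sub_cancel_right] at htri
  rw [hb, abs_neg]
  linarith [abs_sin_sub_sin_le_two_mul_abs_sin_half r z]

lemma monotone_sub_two_mul_abs_sin_half : Monotone fun h : ℝ => h - 2 * |sin (h / 2)| :=
  fun h k hhk => by
    have hsin := (abs_sub_abs_le_abs_sub _ _).trans (abs_sin_sub_sin_le (k / 2) (h / 2))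
    rw [abs_of_nonneg (by linarith : 0 ≤ k / 2 - h / 2)] at hsin
    dsimp only
    linarith

lemma cube_div_le_sub_two_mul_abs_sin_half {h : ℝ} (h0 : 0 ≤ h) (h1 : h ≤ 1) :
    h ^ 3 / 32 ≤ h - 2 * |sin (h / 2)| := by
  have hx : |h / 2| ≤ 1 := by rw [abs_of_nonneg (by linarith)]; linarith
  have htaylor := (abs_le.1 (sin_bound hx)).2
  rw [abs_of_nonneg (by linarith : 0 ≤ h / 2)] at htaylor
  rw [abs_of_nonneg (sin_nonneg_of_nonneg_of_le_pi (by linarith) (by linarith [pi_gt_three]))]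
  have h53 : h ^ 5 ≤ h ^ 3 := pow_le_pow_of_le_one h0 h1 (by norm_num)
  nlinarith [pow_nonneg h0 3]

lemma ρ3_le_mul_sub_two_mul_abs_sin_half {h : ℝ} (h0 : 0 ≤ h) :
    ρ3 h ≤ 224 * (h - 2 * |sin (h / 2)|) := by
  unfold ρ3
  split_ifs with h1
  · linarith [cube_div_le_sub_two_mul_abs_sin_half h0 h1, pow_nonneg h0 3]
  · have hgap := monotone_sub_two_mul_abs_sin_half (le_of_not_ge h1)
    have hgap_one := cube_div_le_sub_two_mul_abs_sin_half zero_le_one le_rfl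
    dsimp only at hgap
    -- `224 = 7 · 32`: on `[1, 3]`, `3h - 2 ≤ 7` while the gap is at least `1 / 32`;
    -- beyond `3`, `3h - 2 ≤ 7 (h - 2)` and the gap is at least `h - 2`.
    rcases le_total h 3 with h3 | h3
    · linarith
    · linarith [abs_sin_le_one (h / 2)]

/-- `b(z) = -z - sin z` is non-increasing, Lipschitz with constant 2, and
there is `ε > 0` with `|b r - b z| ≥ ε ρ_3(|r - z|)` for all `r, z`. -/
theorem stmt16 :
    Antitone (fun z : ℝ => -z - Real.sin z) ∧
    LipschitzWith 2 (fun z : ℝ => -z - Real.sin z) ∧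
    ∃ ε : ℝ, 0 < ε ∧ ∀ r z : ℝ,
      ε * ρ3 |r - z| ≤ |(-r - Real.sin r) - (-z - Real.sin z)| := by
  refine ⟨antitone_b, lipschitzWith_b, 1 / 224, by norm_num, fun r z => ?_⟩
  show 1 / 224 * ρ3 |r - z| ≤ |b r - b z|
  linarith [ρ3_le_mul_sub_two_mul_abs_sin_half (abs_nonneg (r - z)),
    sub_two_mul_abs_sin_half_le_abs_b_sub_b r z]
end
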